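/- Let h be the Hessenberg function h = (2,3,…,n,n), i.e. h(i) = i+1 for 1 ≤ i ≤ n−1 and h(n) = n (the Peterson case). Then the ideal I(h) of ℚ[x_1,…,x_n,t] generated by f_{h(j),j} for j = 1,…,n (that is, by f_{2,1}, f_{3,2}, …, f_{n,n−1}, f_{n,n}) is equal to the ideal generated by the n polynomials (−p_{j−1} + 2p_j − p_{j+1} − 2t)·p_j for 1 ≤ j ≤ n−1 together with p_n. -/

import Mathlib

open MvPolynomial Finset

/-- The variable `t` in `ℚ[x_1,…,x_n,t]`, realized as `MvPolynomial (Option (Fin n)) ℚ`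
with `t = X none`. -/
noncomputable def tv (n : ℕ) : MvPolynomial (Option (Fin n)) ℚ := X none

/-- The variable `x_k` (for `1 ≤ k ≤ n`) in `ℚ[x_1,…,x_n,t]`. -/
noncomputable def xv (n : ℕ) (k : ℕ) : MvPolynomial (Option (Fin n)) ℚ :=
  if h : k - 1 < n then X (some ⟨k - 1, h⟩) else 0

/-- `p_i = ∑_{k=1}^i (x_k - k t)`, with `p_0 = 0`. -/
noncomputable def pp (n : ℕ) (i : ℕ) : MvPolynomial (Option (Fin n)) ℚ :=
  ∑ k ∈ Finset.range i, (xv n (k + 1) - C ((k : ℚ) + 1) * tv n)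

/-- The polynomials `f_{i,j}`: `f_{i,0} = 0`, `f_{j,j} = p_j`, and
`f_{i,j} = f_{i-1,j-1} + (x_j - x_i - t) f_{i-1,j}` for `i > j ≥ 1`. -/
noncomputable def ff (n : ℕ) : ℕ → ℕ → MvPolynomial (Option (Fin n)) ℚ
  | _, 0 => 0
  | 0, _ + 1 => 0
  | i + 1, j + 1 =>
      if i = j then pp n (j + 1)
      else ff n i j + (xv n (j + 1) - xv n (i + 1) - tv n) * ff n i (j + 1)

/-!
Expanding the recursion once, `f_{j+1,j} = f_{j,j-1} + (x_j - x_{j+1} - t) p_j`, and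
`x_j - x_{j+1} - t = -p_{j-1} + 2p_j - p_{j+1} - 2t`. Hence `f_{j+1,j}` is the `j`-th partial
sum of the stated generators, and partial sums generate the same ideal as their terms; the last
generator is `f_{n,n} = p_n`.
-/

theorem Ideal.span_image_sum_Icc {R : Type*} [Ring R] (g : ℕ → R) (m : ℕ) :
    Ideal.span ((fun j => ∑ k ∈ Icc 1 j, g k) '' Set.Icc 1 m) = Ideal.span (g '' Set.Icc 1 m) := by
  apply le_antisymm <;> rw [Ideal.span_le]
  · rintro _ ⟨j, hj, rfl⟩
    refine Ideal.sum_mem _ fun k hk => Ideal.subset_span ⟨k, ?_, rfl⟩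
    simp only [Finset.mem_Icc] at hk
    exact ⟨hk.1, hk.2.trans hj.2⟩
  · rintro _ ⟨j, ⟨hj1, hjm⟩, rfl⟩
    have hsum_mem : ∀ l ≤ m,
        ∑ k ∈ Icc 1 l, g k ∈ Ideal.span ((fun j => ∑ k ∈ Icc 1 j, g k) '' Set.Icc 1 m) := by
      rintro (_ | l) hl
      · simp
      · exact Ideal.subset_span ⟨l + 1, ⟨by omega, hl⟩, rfl⟩
    obtain ⟨i, rfl⟩ : ∃ i, j = i + 1 := ⟨j - 1, by omega⟩
    have hg : g (i + 1) = ∑ k ∈ Icc 1 (i + 1), g k - ∑ k ∈ Icc 1 i, g k := by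
      rw [Finset.sum_Icc_succ_top (by omega), add_sub_cancel_left]
    rw [hg]
    exact sub_mem (hsum_mem _ hjm) (hsum_mem _ (by omega))

noncomputable def petersonGen (n j : ℕ) : MvPolynomial (Option (Fin n)) ℚ :=
  (-(pp n (j - 1)) + 2 * pp n j - pp n (j + 1) - 2 * tv n) * pp n j

theorem xv_sub_xv_sub_tv (n m : ℕ) :
    xv n (m + 1) - xv n (m + 2) - tv n
      = -(pp n m) + 2 * pp n (m + 1) - pp n (m + 2) - 2 * tv n := by
  simp only [pp, Finset.sum_range_succ, Nat.cast_add, Nat.cast_one, map_add, map_one]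
  ring

theorem ff_self (n j : ℕ) : ff n j j = pp n j := by
  cases j <;> simp [ff, pp]

theorem ff_succ_succ_self (n m : ℕ) :
    ff n (m + 2) (m + 1) = ff n (m + 1) m + petersonGen n (m + 1) := by
  rw [ff, if_neg (by omega), ff_self, xv_sub_xv_sub_tv, petersonGen, Nat.add_sub_cancel]

theorem ff_succ_self (n j : ℕ) : ff n (j + 1) j = ∑ k ∈ Icc 1 j, petersonGen n k := by
  induction j with
  | zero => simp [ff]
  | succ m ih => rw [ff_succ_succ_self, ih, Finset.sum_Icc_succ_top (by omega)]

/-- For the Peterson Hessenberg function `h = (2,3,…,n,n)`, the ideal `I(h)` generated by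
`f_{h(j),j}` for `1 ≤ j ≤ n` equals the ideal generated by the polynomials
`(-p_{j-1} + 2 p_j - p_{j+1} - 2t) p_j` for `1 ≤ j ≤ n-1` together with `p_n`. -/
theorem stmt6 (n : ℕ) (hn : 2 ≤ n) (h : ℕ → ℕ)
    (hP : ∀ j : ℕ, 1 ≤ j → j ≤ n - 1 → h j = j + 1) (hPn : h n = n) :
    Ideal.span ((fun j => ff n (h j) j) '' Set.Icc 1 n) =
      Ideal.span
        (((fun j => (-(pp n (j - 1)) + 2 * pp n j - pp n (j + 1) - 2 * tv n) * pp n j) ''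
            Set.Icc 1 (n - 1)) ∪ {pp n n}) := by
  have hIcc : Set.Icc 1 n = Set.Icc 1 (n - 1) ∪ {n} := by
    ext j; simp only [Set.mem_Icc, Set.mem_union, Set.mem_singleton_iff]; omega
  have hgens : (fun j => ff n (h j) j) '' Set.Icc 1 n =
      (fun j => ∑ k ∈ Icc 1 j, petersonGen n k) '' Set.Icc 1 (n - 1) ∪ {pp n n} := by
    rw [hIcc, Set.image_union, Set.image_singleton, hPn, ff_self]
    congr 1
    exact Set.image_congr fun j hj => by rw [hP j hj.1 hj.2, ff_succ_self]
  rw [hgens, Ideal.span_union, Ideal.span_image_sum_Icc, ← Ideal.span_union]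
  rfl
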